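/- arXiv:2411.16918 — 3 statements merged into one kernel-verified Lean document; each statement's English description precedes it below -/
import Mathlib

section
/- For every rooted tree decomposition T of a graph G with width k, there exists a rooted tree decomposition T' of G of the same width k in which every non-root node is the home of exactly one vertex of G, i.e., for every non-root node x there is exactly one vertex v with v in the bag of x and v not in the bag of the parent of x. -/
open SimpleGraph

/-- A rooted tree decomposition of a graph `G` with node type `ι`. -/
structure RootedTD (V : Type) (G : SimpleGraph V) (ι : Type) where
  T : SimpleGraph ι
  tree : T.IsTree
  bag : ι → Finset V
  root : ι
  parent : ι → ι
  parent_root : parent root = root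
  parent_adj : ∀ x, x ≠ root → T.Adj x (parent x)
  parent_reach : ∀ x, ∃ n, parent^[n] x = root
  vert_cover : ∀ v, ∃ x, v ∈ bag x
  edge_cover : ∀ ⦃u v⦄, G.Adj u v → ∃ x, u ∈ bag x ∧ v ∈ bag x
  conn : ∀ (v : V) (x y : ι) (w : T.Walk x y), w.IsPath →
      v ∈ bag x → v ∈ bag y → ∀ z ∈ w.support, v ∈ bag z

/-- D has width exactly k: all bags have size at most k+1 and some bag attains k+1. -/
def RootedTD.HasWidth {V : Type} {G : SimpleGraph V} {ι : Type}
    (D : RootedTD V G ι) (k : ℕ) : Prop :=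
  (∀ x, (D.bag x).card ≤ k + 1) ∧ ∃ x, (D.bag x).card = k + 1

/-!
The parent pointers of `D` already form a tree, and the nodes whose bags contain a vertex `v`
form a subtree of it with a topmost node, the home `h v` of `v`. Order the vertices by the depth
of their home, breaking ties by a fixed linear order; then a bag of `D` lies entirely in the bag
at the home of its latest vertex. The new decomposition has a root with an empty bag and one node
for each vertex `v`, whose bag consists of the vertices in the bag of `h v` that come no later
than `v`, and whose parent is the node of the latest other vertex of that bag. Every new bag lies
in an old one, the latest vertex of a largest old bag gets a node carrying all of it, and `v` is
the only vertex of its node missing from the parent's bag.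
-/

structure RootedParent (κ : Type*) where
  root : κ
  parent : κ → κ
  parent_root : parent root = root
  reach : ∀ x, ∃ n, parent^[n] x = root

namespace RootedParent

variable {κ : Type*} (P : RootedParent κ)

def IsAncestor (a x : κ) : Prop := ∃ n, P.parent^[n] x = a

theorem iterate_root (n : ℕ) : P.parent^[n] P.root = P.root :=
  Function.iterate_fixed P.parent_root n

theorem eq_root_of_iterate_eq_self {x : κ} {n : ℕ} (hn : 0 < n) (h : P.parent^[n] x = x) :
    x = P.root := by
  obtain ⟨m, hm⟩ := P.reach x
  have hper : Function.IsPeriodicPt P.parent (n * m) x :=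
    Function.IsPeriodicPt.mul_const (m := n) h m
  calc x = P.parent^[n * m - m] (P.parent^[m] x) := by
        rw [← Function.iterate_add_apply, Nat.sub_add_cancel (Nat.le_mul_of_pos_left m hn)]
        exact hper.eq.symm
    _ = P.root := by rw [hm, P.iterate_root]

theorem isAncestor_antisymm {a b : κ} (hab : P.IsAncestor a b) (hba : P.IsAncestor b a) :
    a = b := by
  obtain ⟨m, rfl⟩ := hab
  obtain ⟨n, hn⟩ := hba
  rcases Nat.eq_zero_or_pos (n + m) with h | h
  · obtain ⟨rfl, rfl⟩ : n = 0 ∧ m = 0 := by omega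
    rfl
  · rw [← Function.iterate_add_apply] at hn
    rw [P.eq_root_of_iterate_eq_self h hn, P.iterate_root]

theorem not_isAncestor_parent {x : κ} (hx : x ≠ P.root) : ¬ P.IsAncestor x (P.parent x) :=
  fun ⟨n, h⟩ => hx (P.eq_root_of_iterate_eq_self n.succ_pos h)

theorem parent_ne_self {x : κ} (hx : x ≠ P.root) : P.parent x ≠ x :=
  fun h => P.not_isAncestor_parent hx ⟨0, h⟩

noncomputable def depth (x : κ) : ℕ := sInf {n | P.parent^[n] x = P.root}

theorem iterate_depth (x : κ) : P.parent^[P.depth x] x = P.root := Nat.sInf_mem (P.reach x)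

theorem depth_le {x : κ} {n : ℕ} (h : P.parent^[n] x = P.root) : P.depth x ≤ n := Nat.sInf_le h

theorem depth_eq_zero {x : κ} : P.depth x = 0 ↔ x = P.root :=
  ⟨fun h => by simpa [h] using P.iterate_depth x, fun h => Nat.le_zero.1 (P.depth_le (n := 0) h)⟩

theorem depth_parent (x : κ) : P.depth (P.parent x) = P.depth x - 1 := by
  by_cases hx : x = P.root
  · rw [hx, P.parent_root, P.depth_eq_zero.2 rfl]
  · have h0 : P.depth x ≠ 0 := mt P.depth_eq_zero.1 hx
    have h1 : P.depth x ≤ P.depth (P.parent x) + 1 := P.depth_le (P.iterate_depth (P.parent x))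
    have h2 : P.depth (P.parent x) ≤ P.depth x - 1 := P.depth_le <| by
      rw [← Function.iterate_succ_apply, Nat.succ_eq_add_one, Nat.sub_add_cancel (by omega)]
      exact P.iterate_depth x
    omega

theorem depth_iterate (x : κ) (n : ℕ) : P.depth (P.parent^[n] x) = P.depth x - n := by
  induction n with
  | zero => rfl
  | succ n ih => rw [Function.iterate_succ_apply', depth_parent, ih]; omega

theorem iterate_eq_self_of_depth_le {x : κ} {n : ℕ} (h : P.depth x ≤ P.depth (P.parent^[n] x)) :
    P.parent^[n] x = x := by
  rw [depth_iterate] at h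
  rcases Nat.eq_zero_or_pos n with rfl | hn
  · rfl
  · rw [P.depth_eq_zero.1 (show P.depth x = 0 by omega), iterate_root]

def graph : SimpleGraph κ := SimpleGraph.fromRel fun a b => P.parent a = b

theorem graph_adj {a b : κ} : P.graph.Adj a b ↔ a ≠ b ∧ (P.parent a = b ∨ P.parent b = a) :=
  Iff.rfl

theorem graph_adj_parent {x : κ} (hx : x ≠ P.root) : P.graph.Adj x (P.parent x) :=
  P.graph_adj.2 ⟨(P.parent_ne_self hx).symm, Or.inl rfl⟩

theorem exists_walk_iterate (x : κ) (n : ℕ) :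
    ∃ w : P.graph.Walk x (P.parent^[n] x), ∀ z ∈ w.support, ∃ s ≤ n, P.parent^[s] x = z := by
  induction n generalizing x with
  | zero => exact ⟨.nil, by simp⟩
  | succ n ih =>
    by_cases hx : x = P.root
    · subst hx
      refine ⟨Walk.nil.copy rfl (P.iterate_root _).symm, fun z hz => ⟨0, by omega, ?_⟩⟩
      simp only [Walk.support_copy, Walk.support_nil, List.mem_singleton] at hz
      exact hz.symm
    · obtain ⟨w, hw⟩ := ih (P.parent x)
      refine ⟨.cons (P.graph_adj_parent hx) w, ?_⟩
      rintro z (_ | ⟨_, hz⟩)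
      · exact ⟨0, by omega, rfl⟩
      · obtain ⟨s, hs, rfl⟩ := hw z hz
        exact ⟨s + 1, by omega, rfl⟩

theorem connected : P.graph.Connected :=
  (connected_iff_exists_forall_reachable _).2 ⟨P.root, fun x => by
    obtain ⟨n, hn⟩ := P.reach x
    obtain ⟨w, -⟩ := P.exists_walk_iterate x n
    exact (hn ▸ ⟨w⟩ : P.graph.Reachable x P.root).symm⟩

theorem parent_edge_mem_edges {a b z : κ} (w : P.graph.Walk a b) (ha : P.IsAncestor z a)
    (hb : ¬ P.IsAncestor z b) : s(z, P.parent z) ∈ w.edges := by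
  induction w with
  | nil => exact absurd ha hb
  | @cons a c b h w ih =>
    rw [Walk.edges_cons, List.mem_cons]
    by_cases hc : P.IsAncestor z c
    · exact Or.inr (ih hc hb)
    · left
      obtain ⟨n, hn⟩ := ha
      rcases (P.graph_adj.1 h).2 with rfl | rfl
      · cases n with
        | zero => subst hn; rfl
        | succ n => exact absurd ⟨n, hn⟩ hc
      · exact absurd ⟨n + 1, hn⟩ hc

theorem isAcyclic : P.graph.IsAcyclic := by
  rw [isAcyclic_iff_forall_adj_isBridge]
  intro a b hab
  rw [isBridge_iff_forall_walk_mem_edges]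
  intro w
  obtain ⟨hne, rfl | rfl⟩ := P.graph_adj.1 hab
  · have ha : a ≠ P.root := fun h => hne (by rw [h, P.parent_root])
    exact P.parent_edge_mem_edges w ⟨0, rfl⟩ (P.not_isAncestor_parent ha)
  · have hb : b ≠ P.root := fun h => hne (by rw [h, P.parent_root])
    rw [Sym2.eq_swap, ← List.mem_reverse, ← Walk.edges_reverse]
    exact P.parent_edge_mem_edges w.reverse ⟨0, rfl⟩ (P.not_isAncestor_parent hb)

theorem isTree : P.graph.IsTree := ⟨P.connected, P.isAcyclic⟩

def IsConvex (S : Set κ) : Prop :=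
  ∀ ⦃a b : κ⦄ (w : P.graph.Walk a b), w.IsPath → a ∈ S → b ∈ S → ∀ z ∈ w.support, z ∈ S

def IsTop (S : Set κ) (t : κ) : Prop := t ∈ S ∧ (t = P.root ∨ P.parent t ∉ S)

def ChainTo (S : Set κ) (x t : κ) : Prop := ∃ n, P.parent^[n] x = t ∧ ∀ s ≤ n, P.parent^[s] x ∈ S

variable {P}

theorem chainTo_self {S : Set κ} {x : κ} (hx : x ∈ S) : P.ChainTo S x x :=
  ⟨0, rfl, fun s hs => by rwa [Nat.le_zero.1 hs]⟩

theorem ChainTo.cons {S : Set κ} {x t : κ} (hx : x ∈ S) (h : P.ChainTo S (P.parent x) t) :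
    P.ChainTo S x t := by
  obtain ⟨n, hn, hS⟩ := h
  refine ⟨n + 1, hn, ?_⟩
  rintro (_ | s) hs
  · exact hx
  · exact hS s (by omega)

theorem ChainTo.exists_walk {S : Set κ} {x t : κ} (h : P.ChainTo S x t) :
    ∃ w : P.graph.Walk x t, ∀ z ∈ w.support, z ∈ S := by
  obtain ⟨n, rfl, hS⟩ := h
  obtain ⟨w, hw⟩ := P.exists_walk_iterate x n
  exact ⟨w, fun z hz => by obtain ⟨s, hs, rfl⟩ := hw z hz; exact hS s hs⟩

variable (P) in
theorem exists_isTop_chainTo (S : Set κ) {x : κ} (hx : x ∈ S) :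
    ∃ t, P.IsTop S t ∧ P.ChainTo S x t := by
  obtain ⟨m, hm⟩ := P.reach x
  induction m generalizing x with
  | zero => exact ⟨x, ⟨hx, Or.inl hm⟩, chainTo_self hx⟩
  | succ m ih =>
    by_cases htop : P.IsTop S x
    · exact ⟨x, htop, chainTo_self hx⟩
    · have hpx : P.parent x ∈ S := by_contra fun h => htop ⟨hx, Or.inr h⟩
      obtain ⟨t, ht, hchain⟩ := ih hpx hm
      exact ⟨t, ht, hchain.cons hx⟩

theorem IsTop.isAncestor_of_isPath {S : Set κ} {t b : κ} (ht : P.IsTop S t)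
    (w : P.graph.Walk t b) (hw : w.IsPath) (hS : ∀ z ∈ w.support, z ∈ S) : P.IsAncestor t b := by
  cases w with
  | nil => exact ⟨0, rfl⟩
  | @cons _ c _ h w' =>
    by_contra hb
    obtain ⟨hne, hpc | hpc⟩ := P.graph_adj.1 h
    · rcases ht.2 with hr | hn
      · exact hne (by rw [← hpc, hr, P.parent_root])
      · exact hn (hpc ▸ hS c (by simp))
    · have hedge := P.parent_edge_mem_edges w' ⟨1, hpc⟩ hb
      exact ((Walk.cons_isPath_iff _ _).1 hw).2 (w'.fst_mem_support_of_mem_edges hedge)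

theorem IsConvex.chainTo_of_isTop {S : Set κ} (hS : P.IsConvex S) {t x : κ} (ht : P.IsTop S t)
    (hx : x ∈ S) : P.ChainTo S x t := by
  obtain ⟨t', ht', hchain⟩ := P.exists_isTop_chainTo S hx
  suffices t' = t from this ▸ hchain
  obtain ⟨w, hw⟩ := P.connected.preconnected.exists_isPath t t'
  have hwS := hS w hw ht.1 ht'.1
  refine P.isAncestor_antisymm ?_ (ht.isAncestor_of_isPath w hw hwS)
  exact ht'.isAncestor_of_isPath w.reverse hw.reverse (by simpa using hwS)

theorem isConvex_of_chainTo {S : Set κ} {t : κ} (h : ∀ x ∈ S, P.ChainTo S x t) :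
    P.IsConvex S := by
  classical
  intro a b w hw ha hb z hz
  obtain ⟨wa, hwa⟩ := (h a ha).exists_walk
  obtain ⟨wb, hwb⟩ := (h b hb).exists_walk
  have hw_eq : w = (wa.append wb.reverse).bypass := congrArg Subtype.val <|
    (P.isAcyclic.subsingleton_path a b).elim ⟨w, hw⟩ ⟨_, Walk.bypass_isPath _⟩
  rw [hw_eq] at hz
  have hz' := Walk.support_bypass_subset_support _ hz
  rw [Walk.support_append, List.mem_append, Walk.support_reverse] at hz'
  exact hz'.elim (hwa z) fun h => hwb z (List.mem_reverse.1 (List.mem_of_mem_tail h))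

end RootedParent

namespace RootedTD

variable {V ι : Type} {G : SimpleGraph V} (D : RootedTD V G ι)

def toRootedParent : RootedParent ι := ⟨D.root, D.parent, D.parent_root, D.parent_reach⟩

noncomputable abbrev depth : ι → ℕ := D.toRootedParent.depth

theorem graph_le : D.toRootedParent.graph ≤ D.T := by
  intro a b hab
  obtain ⟨hne, rfl | rfl⟩ := D.toRootedParent.graph_adj.1 hab
  · exact D.parent_adj a fun h => hne (by rw [h]; exact D.parent_root.symm)
  · exact (D.parent_adj b fun h => hne (by rw [h]; exact D.parent_root)).symm

theorem isConvex_bag (v : V) : D.toRootedParent.IsConvex {x | v ∈ D.bag x} :=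
  fun a b w hw ha hb z hz => D.conn v a b (w.mapLe D.graph_le) (hw.mapLe D.graph_le) ha hb z
    (by rwa [Walk.support_mapLe_eq_support])

theorem exists_isTop_bag (v : V) : ∃ t, D.toRootedParent.IsTop {x | v ∈ D.bag x} t := by
  obtain ⟨x, hx⟩ := D.vert_cover v
  obtain ⟨t, ht, -⟩ := D.toRootedParent.exists_isTop_chainTo {x | v ∈ D.bag x} hx
  exact ⟨t, ht⟩

noncomputable def home (v : V) : ι := Classical.choose (D.exists_isTop_bag v)

theorem isTop_home (v : V) : D.toRootedParent.IsTop {x | v ∈ D.bag x} (D.home v) :=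
  Classical.choose_spec (D.exists_isTop_bag v)

theorem chainTo_home {v : V} {x : ι} (hx : v ∈ D.bag x) :
    D.toRootedParent.ChainTo {x | v ∈ D.bag x} x (D.home v) :=
  (D.isConvex_bag v).chainTo_of_isTop (D.isTop_home v) hx

theorem mem_bag_iterate_of_depth_le {u : V} {x : ι} (hu : u ∈ D.bag x) {j : ℕ}
    (hj : D.depth (D.home u) ≤ D.depth (D.parent^[j] x)) : u ∈ D.bag (D.parent^[j] x) := by
  obtain ⟨n, hn, hS⟩ := D.chainTo_home hu
  rcases le_total j n with hjn | hnj
  · exact hS j hjn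
  · obtain ⟨k, rfl⟩ := Nat.exists_eq_add_of_le' hnj
    have hk : D.parent^[k + n] x = D.parent^[k] (D.home u) := by
      rw [Function.iterate_add_apply, ← hn]; rfl
    rw [hk] at hj ⊢
    rw [show D.parent^[k] (D.home u) = D.home u from
      D.toRootedParent.iterate_eq_self_of_depth_le hj]
    exact (D.isTop_home u).1

def HasUniqueHomes (D : RootedTD V G ι) : Prop :=
  ∀ x, x ≠ D.root → ∃! v, v ∈ D.bag x ∧ v ∉ D.bag (D.parent x)

def reindex {κ : Type} (e : ι ≃ κ) : RootedTD V G κ where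
  T := D.T.comap e.symm
  tree := (Iso.isTree_iff (Iso.comap e.symm D.T)).2 D.tree
  bag := D.bag ∘ e.symm
  root := e D.root
  parent := e ∘ D.parent ∘ e.symm
  parent_root := by simp [D.parent_root]
  parent_adj x hx := by
    simpa using D.parent_adj (e.symm x) fun h => hx (by simp [← h])
  parent_reach x := by
    obtain ⟨n, hn⟩ := D.parent_reach (e.symm x)
    have hconj : Function.Semiconj e D.parent (e ∘ D.parent ∘ e.symm) := fun y => by simp
    exact ⟨n, by simpa [hn] using (hconj.iterate_right n (e.symm x)).symm⟩
  vert_cover v := by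
    obtain ⟨x, hx⟩ := D.vert_cover v
    exact ⟨e x, by simpa using hx⟩
  edge_cover u v huv := by
    obtain ⟨x, hu, hv⟩ := D.edge_cover huv
    exact ⟨e x, by simpa using hu, by simpa using hv⟩
  conn v x y w hw hx hy z hz := by
    let f := Iso.comap e.symm D.T
    exact D.conn v _ _ (w.map f.toHom) (hw.map f.injective) hx hy (e.symm z)
      (by rw [Walk.support_map]; exact List.mem_map_of_mem hz)

theorem HasWidth.reindex {D : RootedTD V G ι} {κ : Type} {k : ℕ} (hD : D.HasWidth k)
    (e : ι ≃ κ) : (D.reindex e).HasWidth k := by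
  obtain ⟨hle, x, hx⟩ := hD
  exact ⟨fun _ => hle _, e x, by simpa [RootedTD.reindex] using hx⟩

theorem HasUniqueHomes.reindex {D : RootedTD V G ι} {κ : Type} (hD : D.HasUniqueHomes)
    (e : ι ≃ κ) : (D.reindex e).HasUniqueHomes := by
  intro x hx
  simpa [RootedTD.reindex] using hD (e.symm x) fun h => hx (by simp [RootedTD.reindex, ← h])

section UniqueHome

noncomputable def key (v : V) : ℕ ×ₗ V := toLex (D.depth (D.home v), v)

theorem key_injective : Function.Injective D.key :=
  fun _ _ h => congrArg (fun p => (ofLex p).2) h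

variable [LinearOrder V]

theorem mem_bag_home_of_key_le {u v : V} {x : ι} (hu : u ∈ D.bag x) (hv : v ∈ D.bag x)
    (h : D.key u ≤ D.key v) : u ∈ D.bag (D.home v) := by
  obtain ⟨n, hn, -⟩ := D.chainTo_home hv
  have hdepth : D.depth (D.home u) ≤ D.depth (D.home v) :=
    (Prod.Lex.toLex_le_toLex.1 h).elim le_of_lt fun h => h.1.le
  rw [← hn] at hdepth ⊢
  exact D.mem_bag_iterate_of_depth_le hu hdepth

noncomputable def newBag : Option V → Finset V
  | none => ∅
  | some v => (D.bag (D.home v)).filter fun u => D.key u ≤ D.key v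

theorem mem_newBag_some {u v : V} :
    u ∈ D.newBag (some v) ↔ u ∈ D.bag (D.home v) ∧ D.key u ≤ D.key v :=
  Finset.mem_filter

theorem mem_newBag_self (v : V) : v ∈ D.newBag (some v) :=
  D.mem_newBag_some.2 ⟨(D.isTop_home v).1, le_rfl⟩

theorem mem_newBag_of_key_le {u v : V} {x : ι} (hu : u ∈ D.bag x) (hv : v ∈ D.bag x)
    (h : D.key u ≤ D.key v) : u ∈ D.newBag (some v) :=
  D.mem_newBag_some.2 ⟨D.mem_bag_home_of_key_le hu hv h, h⟩

noncomputable def newParent : Option V → Option V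
  | none => none
  | some v =>
    if h : ((D.newBag (some v)).erase v).Nonempty then
      some (Classical.choose (Finset.exists_max_image _ D.key h))
    else none

theorem exists_newParent_eq_some {u v : V} (hu : u ∈ D.newBag (some v)) (huv : u ≠ v) :
    ∃ w, D.newParent (some v) = some w ∧ w ∈ D.bag (D.home v) ∧ D.key u ≤ D.key w := by
  have hne : ((D.newBag (some v)).erase v).Nonempty := ⟨u, Finset.mem_erase.2 ⟨huv, hu⟩⟩
  obtain ⟨hw, hmax⟩ := Classical.choose_spec (Finset.exists_max_image _ D.key hne)
  refine ⟨_, dif_pos hne, (D.mem_newBag_some.1 (Finset.mem_of_mem_erase hw)).1, ?_⟩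
  exact hmax u (Finset.mem_erase.2 ⟨huv, hu⟩)

theorem key_lt_of_newParent_eq_some {v w : V} (h : D.newParent (some v) = some w) :
    D.key w < D.key v := by
  dsimp only [newParent] at h
  split_ifs at h with hne
  obtain ⟨hw, -⟩ := Classical.choose_spec (Finset.exists_max_image _ D.key hne)
  rw [Option.some_inj.1 h] at hw
  obtain ⟨hwv, hw⟩ := Finset.mem_erase.1 hw
  exact (D.mem_newBag_some.1 hw).2.lt_of_ne (D.key_injective.ne hwv)

theorem mem_newBag_newParent {u : V} {z : Option V} (hu : u ∈ D.newBag z) (hz : z ≠ some u) :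
    u ∈ D.newBag (D.newParent z) := by
  cases z with
  | none => simp [newBag] at hu
  | some v =>
    obtain ⟨w, hw, hwb, huw⟩ := D.exists_newParent_eq_some hu fun h => hz (h ▸ rfl)
    rw [hw]
    exact D.mem_newBag_of_key_le (D.mem_newBag_some.1 hu).1 hwb huw

theorem notMem_newBag_newParent (v : V) : v ∉ D.newBag (D.newParent (some v)) := by
  cases h : D.newParent (some v) with
  | none => simp [newBag]
  | some w => exact fun hv => (D.key_lt_of_newParent_eq_some h).not_ge (D.mem_newBag_some.1 hv).2

variable [Fintype V]

theorem newParent_reach (z : Option V) : ∃ n, D.newParent^[n] z = none := by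
  cases z with
  | none => exact ⟨0, rfl⟩
  | some v =>
    induction v using (InvImage.wf D.key wellFounded_lt).induction with
    | _ v ih =>
    cases h : D.newParent (some v) with
    | none => exact ⟨1, h⟩
    | some w =>
      obtain ⟨n, hn⟩ := ih w (D.key_lt_of_newParent_eq_some h)
      exact ⟨n + 1, by rw [Function.iterate_succ_apply, h, hn]⟩

noncomputable def newRootedParent : RootedParent (Option V) :=
  ⟨none, D.newParent, rfl, D.newParent_reach⟩

theorem chainTo_newBag {u : V} {z : Option V} (hz : u ∈ D.newBag z) :
    D.newRootedParent.ChainTo {z | u ∈ D.newBag z} z (some u) := by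
  obtain ⟨t, ⟨htS, htop⟩, hchain⟩ :=
    D.newRootedParent.exists_isTop_chainTo {z | u ∈ D.newBag z} hz
  suffices t = some u from this ▸ hchain
  by_contra hne
  rcases htop with rfl | hp
  · simp [newRootedParent, newBag] at htS
  · exact hp (D.mem_newBag_newParent htS hne)

noncomputable def toUniqueHome : RootedTD V G (Option V) where
  T := D.newRootedParent.graph
  tree := D.newRootedParent.isTree
  bag := D.newBag
  root := none
  parent := D.newParent
  parent_root := rfl
  parent_adj _ hx := D.newRootedParent.graph_adj_parent hx
  parent_reach := D.newParent_reach
  vert_cover v := ⟨some v, D.mem_newBag_self v⟩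
  edge_cover u v huv := by
    obtain ⟨x, hu, hv⟩ := D.edge_cover huv
    rcases le_total (D.key u) (D.key v) with h | h
    · exact ⟨some v, D.mem_newBag_of_key_le hu hv h, D.mem_newBag_self v⟩
    · exact ⟨some u, D.mem_newBag_self u, D.mem_newBag_of_key_le hv hu h⟩
  conn v _ _ w hw hx hy :=
    RootedParent.isConvex_of_chainTo (fun _ hz => D.chainTo_newBag hz) w hw hx hy

theorem HasWidth.toUniqueHome {k : ℕ} (hD : D.HasWidth k) : D.toUniqueHome.HasWidth k := by
  obtain ⟨hle, x, hx⟩ := hD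
  have hcard : ∀ z, (D.newBag z).card ≤ k + 1
    | none => by simp [newBag]
    | some v => (Finset.card_filter_le _ _).trans (hle _)
  obtain ⟨v, hv, hmax⟩ := Finset.exists_max_image (D.bag x) D.key (Finset.card_pos.1 (by omega))
  have hsub : D.bag x ⊆ D.newBag (some v) := fun u hu => D.mem_newBag_of_key_le hu hv (hmax u hu)
  exact ⟨hcard, some v, le_antisymm (hcard _) (hx ▸ Finset.card_le_card hsub)⟩

theorem hasUniqueHomes_toUniqueHome : D.toUniqueHome.HasUniqueHomes := by
  rintro (_ | v) hv
  · exact absurd rfl hv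
  refine ⟨v, ⟨D.mem_newBag_self v, D.notMem_newBag_newParent v⟩, fun u ⟨hu, hnu⟩ => ?_⟩
  by_contra huv
  exact hnu (D.mem_newBag_newParent hu fun h => huv (Option.some_injective _ h).symm)

end UniqueHome

end RootedTD

/-- every rooted tree decomposition of width k can be turned into a
rooted tree decomposition of the same width k in which every non-root node is the
home of exactly one vertex. -/
theorem stmt0 {V ι : Type} [Fintype V] (G : SimpleGraph V) (D : RootedTD V G ι) (k : ℕ)
    (hw : D.HasWidth k) :
    ∃ (m : ℕ) (D' : RootedTD V G (Fin m)), D'.HasWidth k ∧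
      ∀ x, x ≠ D'.root → ∃! v, v ∈ D'.bag x ∧ v ∉ D'.bag (D'.parent x) := by
  let _ : LinearOrder V := LinearOrder.lift' _ (Fintype.equivFin V).injective
  let e := Fintype.equivFin (Option V)
  exact ⟨_, D.toUniqueHome.reindex e, hw.toUniqueHome.reindex e,
    D.hasUniqueHomes_toUniqueHome.reindex e⟩
end

section
/- Let T be a rooted tree decomposition of G, let P = (C_1, C_2, C_3, S) be a legal partition of V, and call a node x editable if its bag meets at least two distinct parts C_i and C_j. If P is a split of T (satisfying conditions (a) and (b) of the split definition), then the parent of every editable non-root node is also editable; consequently the set of editable nodes induces a connected subtree of T containing the root. -/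
open SimpleGraph

/-- A node x is editable with respect to the partition with parts C if its bag
meets at least two distinct parts. -/
def Editable {V : Type} {G : SimpleGraph V} {ι : Type}
    (D : RootedTD V G ι) (C : Fin 3 → Set V) (x : ι) : Prop :=
  ∃ i j, i ≠ j ∧ (C i ∩ (D.bag x : Set V)).Nonempty ∧ (C j ∩ (D.bag x : Set V)).Nonempty

/-- for a split, the parent of every editable non-root node is
editable; consequently the editable nodes form a subtree closed under taking
ancestors and containing the root. -/
theorem stmt9 {V ι : Type} (G : SimpleGraph V) (D : RootedTD V G ι)
    (C : Fin 3 → Set V) (S : Set V)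
    (hdisj : ∀ i j, i ≠ j → Disjoint (C i) (C j))
    (hdisjS : ∀ i, Disjoint (C i) S)
    (hcover : (S ∪ ⋃ i, C i) = Set.univ)
    (hlegal : ∀ i j, i ≠ j → ∀ u ∈ C i, ∀ v ∈ C j, ¬ G.Adj u v)
    (a : ι → Finset (Fin 3)) (hne : ∀ x, (a x).Nonempty)
    (ha1 : ∀ x, (∃ i, (C i ∩ (D.bag x : Set V)).Nonempty) →
        ∀ i, i ∈ a x ↔ (C i ∩ (D.bag x : Set V)).Nonempty)
    (ha2 : ∀ x, ¬ (∃ i, (C i ∩ (D.bag x : Set V)).Nonempty) →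
        ∃ i ∈ a (D.parent x), a x = {i})
    (hb : ∀ x, a x ⊆ a (D.parent x)) :
    (∀ x, x ≠ D.root → Editable D C x → Editable D C (D.parent x)) ∧
    (∀ x, Editable D C x → ∀ n, Editable D C (D.parent^[n] x)) ∧
    (∀ x, Editable D C x → Editable D C D.root) := by
  have key : ∀ x, Editable D C x → Editable D C (D.parent x) := by
    intro x hx
    obtain ⟨i, j, hij, hi, hj⟩ := hx
    have hix : i ∈ a x := (ha1 x ⟨i, hi⟩ i).mpr hi
    have hjx : j ∈ a x := (ha1 x ⟨i, hi⟩ j).mpr hj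
    have hip := hb x hix
    have hjp := hb x hjx
    have hex : ∃ k, (C k ∩ (D.bag (D.parent x) : Set V)).Nonempty := by
      by_contra h
      obtain ⟨k, _, hk⟩ := ha2 (D.parent x) h
      have h1 : a x ⊆ a (D.parent x) := hb x
      have : i ∈ a (D.parent x) := hip
      rw [hk] at hip hjp
      simp only [Finset.mem_singleton] at hip hjp
      exact hij (hip.trans hjp.symm)
    exact ⟨i, j, hij, (ha1 _ hex i).mp hip, (ha1 _ hex j).mp hjp⟩
  have iter : ∀ x, Editable D C x → ∀ n, Editable D C (D.parent^[n] x) := by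
    intro x hx n
    induction n with
    | zero => exact hx
    | succ n ih => rw [Function.iterate_succ_apply']; exact key _ ih
  refine ⟨fun x _ => key x, iter, fun x hx => ?_⟩
  obtain ⟨n, hn⟩ := D.parent_reach x
  rw [← hn]; exact iter x hx n
end

section
/- Let G be a graph with treewidth at most k. Then for every rooted tree decomposition T of G whose root bag B_r has size |B_r| > 2(k+1), there exists a legal partition (C_1, C_2, C_3, S) of V(G) with |S| ≤ k+1 such that at least two of the sets C_1 ∩ B_r, C_2 ∩ B_r, C_3 ∩ B_r are nonempty. -/
open SimpleGraph

/-- The treewidth of G is at most k. -/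
def treewidthLE (V : Type) (G : SimpleGraph V) (k : ℕ) : Prop :=
  ∃ (m : ℕ) (D : RootedTD V G (Fin m)), ∀ x, (D.bag x).card ≤ k + 1

/-!
Take a tree decomposition `E` of width at most `k` and let `B` be the root bag of `D`. Suppose no
bag `E.bag t` separates two vertices of `B` lying outside it. Then `B ∖ E.bag t` lies in a single
branch of the tree at `t`, so `t` can point to its neighbour in that branch. Following these
pointers, the branch pointed into shrinks strictly unless the pointer is immediately reversed, so
in a finite tree some edge `a – b` has `a` and `b` pointing at each other. Then no vertex of `B`
misses both bags, so `|B| ≤ |E.bag a| + |E.bag b| ≤ 2(k + 1)`, a contradiction.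

Hence some bag `S` separates `u, v ∈ B ∖ S`. The vertices reachable from `u` outside `S` form one
part, the remaining vertices of `V ∖ S` another, and the third part is empty.
-/

namespace SimpleGraph

variable {V : Type*} {G : SimpleGraph V}

def Separates (G : SimpleGraph V) (S : Set V) (u v : V) : Prop :=
  ∀ p : G.Walk u v, ∃ w ∈ p.support, w ∈ S

lemma separates_singleton_iff {t u v : V} :
    G.Separates {t} u v ↔ ∀ p : G.Walk u v, t ∈ p.support := by
  simp [Separates]

lemma separates_of_mem_left {S : Set V} {u : V} (hu : u ∈ S) (v : V) : G.Separates S u v :=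
  fun p => ⟨u, p.start_mem_support, hu⟩

lemma Separates.symm {S : Set V} {u v : V} (h : G.Separates S u v) : G.Separates S v u := by
  intro p
  simpa using h p.reverse

lemma Separates.left_or_right {S : Set V} {u w : V} (h : G.Separates S u w) (v : V) :
    G.Separates S u v ∨ G.Separates S v w := by
  refine or_iff_not_imp_left.2 fun huv q => by_contra fun hq => huv fun p => ?_
  obtain ⟨x, hx, hxS⟩ := h (p.append q)
  rw [Walk.mem_support_append_iff] at hx
  exact hx.elim (fun hx => ⟨x, hx, hxS⟩) (fun hx => (hq ⟨x, hx, hxS⟩).elim)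

lemma Separates.of_separates_singleton {S : Set V} {a z w : V} (ha : G.Separates {a} z w)
    (h : G.Separates S a w) : G.Separates S z w := by
  classical
  intro p
  have hap : a ∈ p.support := separates_singleton_iff.1 ha p
  obtain ⟨x, hx, hxS⟩ := h (p.dropUntil a hap)
  exact ⟨x, p.support_dropUntil_subset_support hap hx, hxS⟩

lemma Reachable.exists_adj_not_separates {x y : V} (h : G.Reachable x y) (hxy : x ≠ y) :
    ∃ b, G.Adj x b ∧ ¬ G.Separates {x} b y := by
  classical
  obtain ⟨p, hp⟩ := h.exists_isPath
  cases p with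
  | nil => exact absurd rfl hxy
  | cons hadj q =>
    rw [Walk.cons_isPath_iff] at hp
    exact ⟨_, hadj, fun hs => hp.2 (separates_singleton_iff.1 hs q)⟩

lemma IsAcyclic.separates_singleton_iff_mem_support (hG : G.IsAcyclic) {t x y : V}
    {p : G.Walk x y} (hp : p.IsPath) : G.Separates {t} x y ↔ t ∈ p.support := by
  classical
  refine ⟨fun h => separates_singleton_iff.1 h p, fun ht => ?_⟩
  rw [separates_singleton_iff]
  intro q
  have : q.bypass = p :=
    congrArg Subtype.val ((hG.subsingleton_path x y).elim ⟨_, q.bypass_isPath⟩ ⟨p, hp⟩)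
  exact q.support_bypass_subset_support (this ▸ ht)

lemma IsAcyclic.separates_or_separates_of_adj (hG : G.IsAcyclic) {a b : V} (hab : G.Adj a b)
    (z : V) : G.Separates {a} z b ∨ G.Separates {b} z a := by
  classical
  by_cases hz : G.Reachable z a
  · obtain ⟨p, hp⟩ := hz.exists_isPath
    by_cases hb : b ∈ p.support
    · exact Or.inr ((hG.separates_singleton_iff_mem_support hp).2 hb)
    · exact Or.inl ((hG.separates_singleton_iff_mem_support (hp.concat hb hab)).2 (by simp))
  · exact Or.inl fun p => absurd (p.reachable.trans hab.symm.reachable) hz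

/-- `{z | ¬ G.Separates {a} z b}` is the branch at `a` containing `b`. -/
lemma IsAcyclic.setOf_not_separates_ssubset (hG : G.IsAcyclic) {a b c : V} (hab : G.Adj a b)
    (hbc : G.Adj b c) (hca : c ≠ a) :
    {z | ¬ G.Separates {b} z c} ⊂ {z | ¬ G.Separates {a} z b} := by
  have hbac : G.Separates {b} a c := by
    have hp : (Walk.cons hab (.cons hbc .nil)).IsPath := by
      simp [Walk.cons_isPath_iff, hab.ne, hbc.ne, hca.symm]
    exact (hG.separates_singleton_iff_mem_support hp).2 (by simp)
  refine ⟨fun z hz hazb => hz ?_, fun h => ?_⟩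
  · refine (hazb.left_or_right c).elim (·.of_separates_singleton hbac) fun hacb => ?_
    simpa [hca.symm, hab.ne] using separates_singleton_iff.1 hacb (.cons hbc.symm .nil)
  · have hb : ¬ G.Separates {a} b b := fun hs => hab.ne' (by simpa using hs .nil)
    exact h hb (separates_of_mem_left (Set.mem_singleton b) c)

theorem IsAcyclic.exists_apply_apply_eq [Finite V] [Nonempty V] (hG : G.IsAcyclic) (f : V → V)
    (hf : ∀ a, G.Adj a (f a)) : ∃ a, f (f a) = a := by
  obtain ⟨a, ha⟩ := Finite.exists_min fun a => {z | ¬ G.Separates {a} z (f a)}.ncard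
  refine ⟨a, by_contra fun hfa => (ha (f a)).not_gt ?_⟩
  exact Set.ncard_lt_ncard (hG.setOf_not_separates_ssubset (hf a) (hf (f a)) hfa) (Set.toFinite _)

theorem IsTree.exists_adj_disjoint {α : Type*} [Finite V] (hG : G.IsTree) (x : α → V)
    (M : V → Set α) (hM : ∀ t, (M t).Nonempty)
    (hsep : ∀ t, ∀ u ∈ M t, ∀ v ∈ M t, ¬ G.Separates {t} (x u) (x v)) :
    ∃ a b, G.Adj a b ∧ Disjoint (M a) (M b) := by
  choose u hu using hM
  have hxu (t : V) : t ≠ x (u t) := fun h =>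
    hsep t _ (hu t) _ (hu t) (separates_of_mem_left (S := {t}) h.symm _)
  choose f hf hfu using fun t =>
    (hG.connected.preconnected t (x (u t))).exists_adj_not_separates (hxu t)
  have hfM (t : V) : ∀ v ∈ M t, ¬ G.Separates {t} (x v) (f t) := fun v hv hs =>
    (hs.left_or_right (x (u t))).elim (hsep t v hv _ (hu t)) fun h => hfu t h.symm
  have := hG.connected.nonempty
  obtain ⟨a, ha⟩ := hG.isAcyclic.exists_apply_apply_eq f hf
  refine ⟨a, f a, hf a, Set.disjoint_left.2 fun w hwa hwb => ?_⟩
  rcases hG.isAcyclic.separates_or_separates_of_adj (hf a) (x w) with h | h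
  · exact hfM a w hwa h
  · exact hfM (f a) w hwb (by rwa [ha])

def IsLegalPartition {ι : Type*} (G : SimpleGraph V) (C : ι → Set V) (S : Set V) : Prop :=
  (∀ i j, i ≠ j → Disjoint (C i) (C j)) ∧ (∀ i, Disjoint (C i) S) ∧ (S ∪ ⋃ i, C i) = Set.univ ∧
    ∀ i j, i ≠ j → ∀ u ∈ C i, ∀ v ∈ C j, ¬ G.Adj u v

lemma isLegalPartition_fibers {ι : Type*} {S : Set V} (c : V → ι)
    (hc : ∀ a b, G.Adj a b → a ∉ S → b ∉ S → c a = c b) :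
    G.IsLegalPartition (fun i => {w | w ∉ S ∧ c w = i}) S := by
  refine ⟨fun i j hij => Set.disjoint_left.2 ?_, fun i => Set.disjoint_left.2 fun w hw => hw.1,
    ?_, ?_⟩
  · rintro w ⟨-, rfl⟩ ⟨-, hw⟩
    exact hij hw
  · ext w
    by_cases hw : w ∈ S <;> simp [hw]
  · rintro i j hij a ⟨ha, rfl⟩ b ⟨hb, rfl⟩ hab
    exact hij (hc a b hab ha hb)

lemma Separates.exists_isLegalPartition {ι : Type*} {S : Set V} {u v : V} (h : G.Separates S u v)
    (hu : u ∉ S) (hv : v ∉ S) (i j : ι) :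
    ∃ C : ι → Set V, G.IsLegalPartition C S ∧ u ∈ C i ∧ v ∈ C j := by
  classical
  let R (w : V) : Prop := ∃ p : G.Walk u w, ∀ x ∈ p.support, x ∉ S
  have hR (a b : V) (hab : G.Adj a b) (hb : b ∉ S) : R a → R b := fun ⟨p, hp⟩ =>
    ⟨p.concat hab, by simpa [Walk.support_concat, or_imp, forall_and, hb] using hp⟩
  refine ⟨_, isLegalPartition_fibers (fun w => if R w then i else j) fun a b hab ha hb => ?_,
    ⟨hu, ?_⟩, ⟨hv, ?_⟩⟩
  · exact if_congr ⟨hR a b hab hb, hR b a hab.symm ha⟩ rfl rfl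
  · exact if_pos ⟨.nil, by simpa using hu⟩
  · refine if_neg fun ⟨p, hp⟩ => ?_
    obtain ⟨w, hw, hwS⟩ := h p
    exact hp w hw hwS

end SimpleGraph

namespace RootedTD

variable {V ι : Type} {G : SimpleGraph V} (E : RootedTD V G ι)

lemma mem_bag_of_separates {v : V} {x y t : ι} (hx : v ∈ E.bag x) (hy : v ∈ E.bag y)
    (ht : E.T.Separates {t} x y) : v ∈ E.bag t := by
  obtain ⟨p, hp⟩ := (E.tree.connected.preconnected x y).exists_isPath
  exact E.conn v x y p hp hx hy t (separates_singleton_iff.1 ht p)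

lemma separates_bag {u v : V} {x y t : ι} (hu : u ∈ E.bag x) (hv : v ∈ E.bag y)
    (ht : E.T.Separates {t} x y) : G.Separates (E.bag t) u v := by
  intro P
  induction P generalizing x with
  | nil => exact ⟨_, Walk.start_mem_support _, E.mem_bag_of_separates hu hv ht⟩
  | cons h P ih =>
    obtain ⟨z, hz, hz'⟩ := E.edge_cover h
    rcases ht.left_or_right z with hxz | hzy
    · exact ⟨_, Walk.start_mem_support _, E.mem_bag_of_separates hu hz hxz⟩
    · obtain ⟨w, hw, hwt⟩ := ih hz' hv hzy
      exact ⟨w, by simp [hw], hwt⟩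

theorem exists_bag_separates [Finite ι] {k : ℕ} (hE : ∀ x, (E.bag x).card ≤ k + 1)
    {B : Finset V} (hB : 2 * (k + 1) < B.card) :
    ∃ t u v, u ∈ B ∧ v ∈ B ∧ u ∉ E.bag t ∧ v ∉ E.bag t ∧ G.Separates (E.bag t) u v := by
  classical
  by_contra! hcon
  choose x hx using E.vert_cover
  let M (t : ι) : Set V := {u | u ∈ B ∧ u ∉ E.bag t}
  have hM (t : ι) : (M t).Nonempty :=
    Finset.exists_mem_notMem_of_card_lt_card ((hE t).trans_lt (by omega))
  have hsep (t : ι) : ∀ u ∈ M t, ∀ v ∈ M t, ¬ E.T.Separates {t} (x u) (x v) :=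
    fun u ⟨hu, hut⟩ v ⟨hv, hvt⟩ hs => hcon t u v hu hv hut hvt (E.separates_bag (hx u) (hx v) hs)
  obtain ⟨a, b, -, hdisj⟩ := E.tree.exists_adj_disjoint x M hM hsep
  have hBab : B ⊆ E.bag a ∪ E.bag b := fun w hw => by
    by_contra hw'
    simp only [Finset.mem_union, not_or] at hw'
    exact Set.disjoint_left.1 hdisj ⟨hw, hw'.1⟩ ⟨hw, hw'.2⟩
  have := (Finset.card_le_card hBab).trans (Finset.card_union_le _ _)
  linarith [hE a, hE b]

end RootedTD

theorem stmt17_general {V ι : Type} (G : SimpleGraph V) (k : ℕ)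
    (htw : treewidthLE V G k) (D : RootedTD V G ι)
    (hr : 2 * (k + 1) < (D.bag D.root).card) :
    ∃ (C : Fin 3 → Set V) (S : Set V), S.ncard ≤ k + 1 ∧
      (∀ i j, i ≠ j → Disjoint (C i) (C j)) ∧
      (∀ i, Disjoint (C i) S) ∧
      (S ∪ ⋃ i, C i) = Set.univ ∧
      (∀ i j, i ≠ j → ∀ u ∈ C i, ∀ v ∈ C j, ¬ G.Adj u v) ∧
      ∃ i j, i ≠ j ∧ (C i ∩ (D.bag D.root : Set V)).Nonempty ∧
        (C j ∩ (D.bag D.root : Set V)).Nonempty := by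
  obtain ⟨m, E, hE⟩ := htw
  obtain ⟨t, u, v, huB, hvB, hut, hvt, hsep⟩ := E.exists_bag_separates hE hr
  obtain ⟨C, ⟨hdisj, hdisjS, hcover, hnadj⟩, hu, hv⟩ :=
    hsep.exists_isLegalPartition (Finset.mem_coe.not.2 hut) (Finset.mem_coe.not.2 hvt)
      (0 : Fin 3) 1
  refine ⟨C, E.bag t, ?_, hdisj, hdisjS, hcover, hnadj, 0, 1, by decide, ⟨u, hu, huB⟩, ⟨v, hv, hvB⟩⟩
  rw [Set.ncard_coe_finset]
  exact hE t

/-- if tw(G) ≤ k and the root bag has size more than 2(k+1), then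
there is a legal partition (C 1, C 2, C 3, S) of V with |S| ≤ k+1 such that at
least two of the sets C i ∩ B_r are nonempty. -/
theorem stmt17 {V ι : Type} [Fintype V] (G : SimpleGraph V) (k : ℕ)
    (htw : treewidthLE V G k) (D : RootedTD V G ι)
    (hr : 2 * (k + 1) < (D.bag D.root).card) :
    ∃ (C : Fin 3 → Set V) (S : Set V), S.ncard ≤ k + 1 ∧
      (∀ i j, i ≠ j → Disjoint (C i) (C j)) ∧
      (∀ i, Disjoint (C i) S) ∧
      (S ∪ ⋃ i, C i) = Set.univ ∧
      (∀ i j, i ≠ j → ∀ u ∈ C i, ∀ v ∈ C j, ¬ G.Adj u v) ∧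
      ∃ i j, i ≠ j ∧ (C i ∩ (D.bag D.root : Set V)).Nonempty ∧
        (C j ∩ (D.bag D.root : Set V)).Nonempty :=
  stmt17_general G k htw D hr
end
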